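/- Let E be a measurable space, μ a probability measure on E, and X_1, X_2, … independent E-valued random variables each with law μ. Let F be a countable family of measurable functions from E to [−1,1], let k ≥ 1, C₀ ≥ 1 and t ∈ (0,1], and suppose that for every ε > 0 the family F admits an ε-net in the uniform norm of cardinality at most (C₀/(ε·√t))^k. Then there exists a constant C > 0 depending only on C₀ and k such that for every n ≥ 2, with probability at least 1 − 1/(2n): sup_{f∈F} |(1/n)∑_{i=1}^n f(X_i) − ∫_E f dμ| ≤ C·n^{−1/2}·(ln n − ln t + 1)^{1/2}. -/

import Mathlib

/-! By Hoeffding's inequality, the empirical mean of a single `[-1, 1]`-valued function deviates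
from its mean by at least `δ` with probability at most `2 exp (-n δ² / 2)`. A `1/√n`-net of size
`m ≤ (C₀ √n / √t)^k` is controlled simultaneously by a union bound, and replacing `f ∈ F` by a net
element within `1/√n` moves both the empirical mean and the mean by at most `1/√n`. With
`n δ² / 2 = K (ln n - ln t + 1)` and `K = k (ln C₀ + 1) + ln 4 + 1` the failure probability
`2 m exp (-n δ² / 2)` is at most `1/(2n)`, because `ln (4 n m) ≤ K (ln n - ln t + 1)`. -/

open MeasureTheory ProbabilityTheory Real Finset
open scoped NNReal

noncomputable def empiricalMean {E : Type*} (f : E → ℝ) (n : ℕ) (x : ℕ → E) : ℝ :=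
  (1 / (n : ℝ)) * ∑ j ∈ range n, f (x j)

lemma abs_empiricalMean_sub_integral_le {E : Type*} [MeasurableSpace E] {μ : Measure E}
    [IsProbabilityMeasure μ] {f g : E → ℝ} {ε : ℝ} (hf : Integrable f μ) (hg : Integrable g μ)
    (hfg : ∀ y, |f y - g y| ≤ ε) (n : ℕ) (x : ℕ → E) :
    |empiricalMean f n x - ∫ y, f y ∂μ| ≤ |empiricalMean g n x - ∫ y, g y ∂μ| + 2 * ε := by
  have hmean : |empiricalMean f n x - empiricalMean g n x| ≤ ε := by
    rcases n.eq_zero_or_pos with rfl | hn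
    -- both means vanish, and `0 ≤ ε` since `E` is inhabited by `x 0`
    · simpa [empiricalMean] using (abs_nonneg _).trans (hfg (x 0))
    have hsum : |∑ j ∈ range n, (f (x j) - g (x j))| ≤ n * ε := by
      simpa using (abs_sum_le_sum_abs _ (range n)).trans
        (sum_le_card_nsmul _ _ _ fun j _ ↦ hfg (x j))
    rw [empiricalMean, empiricalMean, ← mul_sub, ← sum_sub_distrib, abs_mul,
      abs_of_pos (by positivity)]
    calc 1 / (n : ℝ) * |∑ j ∈ range n, (f (x j) - g (x j))| ≤ 1 / n * (n * ε) := by gcongr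
      _ = ε := by field_simp
  have hintegral : |∫ y, g y ∂μ - ∫ y, f y ∂μ| ≤ ε := by
    rw [← integral_sub hg hf]
    have hgf : ∀ y, ‖g y - f y‖ ≤ ε := fun y ↦ (abs_sub_comm (g y) (f y)).trans_le (hfg y)
    simpa using norm_integral_le_of_norm_le_const (μ := μ) (ae_of_all _ hgf)
  calc |empiricalMean f n x - ∫ y, f y ∂μ|
      = |(empiricalMean f n x - empiricalMean g n x) + (empiricalMean g n x - ∫ y, g y ∂μ)
          + (∫ y, g y ∂μ - ∫ y, f y ∂μ)| := by ring_nf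
    _ ≤ _ := abs_add_three _ _ _
    _ ≤ _ := by linarith

lemma measureReal_abs_sum_range_ge_le_of_iIndepFun {Ω : Type*} [MeasurableSpace Ω]
    {μ : Measure Ω} [IsFiniteMeasure μ] {X : ℕ → Ω → ℝ} (h_indep : iIndepFun X μ) {c : ℝ≥0} {n : ℕ}
    (h_subG : ∀ i < n, HasSubgaussianMGF (X i) c μ) {ε : ℝ} (hε : 0 ≤ ε) :
    μ.real {ω | ε ≤ |∑ i ∈ range n, X i ω|} ≤ 2 * exp (-ε ^ 2 / (2 * n * c)) := by
  have h_indep_neg : iIndepFun (fun i ↦ -X i) μ :=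
    h_indep.comp (fun _ y ↦ -y) fun _ ↦ measurable_neg
  calc μ.real {ω | ε ≤ |∑ i ∈ range n, X i ω|}
      ≤ μ.real ({ω | ε ≤ ∑ i ∈ range n, X i ω} ∪ {ω | ε ≤ ∑ i ∈ range n, (-X i) ω}) := by
        refine measureReal_mono (fun ω hω ↦ ?_) (by finiteness)
        simpa [le_abs] using hω
    _ ≤ exp (-ε ^ 2 / (2 * n * c)) + exp (-ε ^ 2 / (2 * n * c)) :=
        (measureReal_union_le _ _).trans <| add_le_add
          (HasSubgaussianMGF.measure_sum_range_ge_le_of_iIndepFun h_indep h_subG hε)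
          (HasSubgaussianMGF.measure_sum_range_ge_le_of_iIndepFun h_indep_neg
            (fun i hi ↦ (h_subG i hi).neg) hε)
    _ = 2 * exp (-ε ^ 2 / (2 * n * c)) := (two_mul _).symm

lemma measureReal_abs_empiricalMean_sub_integral_ge_le {E Ω : Type*} [MeasurableSpace E]
    [MeasurableSpace Ω] {μ : Measure E} {P : Measure Ω} [IsProbabilityMeasure P]
    {X : ℕ → Ω → E} (hX : ∀ i, Measurable (X i)) (h_indep : iIndepFun X P)
    (hlaw : ∀ i, P.map (X i) = μ) {g : E → ℝ} (hg : Measurable g)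
    (hg_bdd : ∀ x, g x ∈ Set.Icc (-1 : ℝ) 1) {n : ℕ} (hn : 0 < n) {δ : ℝ} (hδ : 0 ≤ δ) :
    P.real {ω | δ ≤ |empiricalMean g n (X · ω) - ∫ x, g x ∂μ|} ≤ 2 * exp (-(n * δ ^ 2 / 2)) := by
  have hn' : (0 : ℝ) < n := by exact_mod_cast hn
  have hmean : ∀ i, P[g ∘ X i] = ∫ x, g x ∂μ := fun i ↦ by
    rw [← hlaw i, integral_map (hX i).aemeasurable hg.aestronglyMeasurable, Function.comp_def]
  have h_indep' : iIndepFun (fun i ω ↦ g (X i ω) - ∫ x, g x ∂μ) P :=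
    h_indep.comp (fun _ x ↦ g x - ∫ x, g x ∂μ) fun _ ↦ hg.sub_const _
  have h_subG : ∀ i < n, HasSubgaussianMGF (fun ω ↦ g (X i ω) - ∫ x, g x ∂μ) 1 P := by
    intro i _
    have := hasSubgaussianMGF_of_mem_Icc (hg.comp (hX i)).aemeasurable
      (ae_of_all P fun ω ↦ hg_bdd (X i ω))
    have hc : (‖(1 : ℝ) - -1‖₊ / 2) ^ 2 = 1 := by norm_num [← NNReal.coe_inj]
    rwa [hmean i, hc] at this
  have hset : {ω | δ ≤ |empiricalMean g n (X · ω) - ∫ x, g x ∂μ|}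
      = {ω | n * δ ≤ |∑ i ∈ range n, (g (X i ω) - ∫ x, g x ∂μ)|} := by
    ext ω
    rw [Set.mem_ofPred_eq, Set.mem_ofPred_eq, sum_sub_distrib, sum_const, card_range, nsmul_eq_mul,
      show ∑ i ∈ range n, g (X i ω) - n * ∫ x, g x ∂μ
        = n * (empiricalMean g n (X · ω) - ∫ x, g x ∂μ) by
          rw [empiricalMean]; field_simp,
      abs_mul, abs_of_pos hn', mul_le_mul_iff_right₀ hn']
  rw [hset]
  refine (measureReal_abs_sum_range_ge_le_of_iIndepFun h_indep' h_subG (by positivity)).trans_eq ?_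
  simp only [NNReal.coe_one, mul_one]
  field_simp

lemma ofReal_one_sub_le_measure_forall_abs_empiricalMean_sub_integral_le {E Ω ι : Type*}
    [MeasurableSpace E] [MeasurableSpace Ω] {μ : Measure E} {P : Measure Ω}
    [IsProbabilityMeasure μ] [IsProbabilityMeasure P]
    {X : ℕ → Ω → E} (hX : ∀ i, Measurable (X i)) (h_indep : iIndepFun X P)
    (hlaw : ∀ i, P.map (X i) = μ) {F : ι → E → ℝ} (hF : ∀ i, Integrable (F i) μ)
    {m : ℕ} {g : Fin m → E → ℝ} (hg : ∀ j, Measurable (g j))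
    (hg_bdd : ∀ j x, g j x ∈ Set.Icc (-1 : ℝ) 1) {ε : ℝ}
    (hnet : ∀ i, ∃ j, ∀ x, |F i x - g j x| ≤ ε) {n : ℕ} (hn : 0 < n) {δ : ℝ} (hδ : 0 ≤ δ) :
    ENNReal.ofReal (1 - m * (2 * exp (-(n * δ ^ 2 / 2)))) ≤
      P {ω | ∀ i, |empiricalMean (F i) n (X · ω) - ∫ x, F i x ∂μ| ≤ δ + 2 * ε} := by
  set bad : Fin m → Set Ω := fun j ↦ {ω | δ ≤ |empiricalMean (g j) n (X · ω) - ∫ x, g j x ∂μ|}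
  have hbad_meas : MeasurableSet (⋃ j, bad j) := by
    refine MeasurableSet.iUnion fun j ↦ measurableSet_le measurable_const ?_
    unfold empiricalMean
    fun_prop
  have hbad : P.real (⋃ j, bad j) ≤ m * (2 * exp (-(n * δ ^ 2 / 2))) := by
    refine (measureReal_iUnion_fintype_le _).trans ?_
    simpa using sum_le_sum (s := univ) fun j _ ↦
      measureReal_abs_empiricalMean_sub_integral_ge_le hX h_indep hlaw (hg j) (hg_bdd j) hn hδ
  have hgood : (⋃ j, bad j)ᶜ ⊆
      {ω | ∀ i, |empiricalMean (F i) n (X · ω) - ∫ x, F i x ∂μ| ≤ δ + 2 * ε} := by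
    intro ω hω i
    obtain ⟨j, hj⟩ := hnet i
    have hgj : ω ∉ bad j := (Set.mem_compl_iff _ _).1 hω ∘ Set.mem_iUnion_of_mem j
    refine (abs_empiricalMean_sub_integral_le (hF i)
      (Integrable.of_mem_Icc (-1) 1 (hg j).aemeasurable (ae_of_all _ (hg_bdd j))) hj n _).trans ?_
    simp only [bad, Set.mem_ofPred_eq, not_le] at hgj
    linarith
  calc ENNReal.ofReal (1 - m * (2 * exp (-(n * δ ^ 2 / 2))))
      ≤ ENNReal.ofReal (P.real (⋃ j, bad j)ᶜ) := by
        rw [probReal_compl_eq_one_sub hbad_meas]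
        gcongr
    _ = P (⋃ j, bad j)ᶜ := ofReal_measureReal
    _ ≤ _ := measure_mono hgood

lemma log_four_mul_mul_pow_le {k n : ℕ} {C₀ t : ℝ} (hC₀ : 1 ≤ C₀) (hn : 1 ≤ n) (ht : 0 < t)
    (ht1 : t ≤ 1) :
    log (4 * n * (C₀ * √n / √t) ^ k) ≤
      (k * (log C₀ + 1) + log 4 + 1) * (log n - log t + 1) := by
  have hn0 : (0 : ℝ) < n := by exact_mod_cast hn
  have hlogC₀ : 0 ≤ log C₀ := log_nonneg hC₀
  have hlogn : 0 ≤ log n := log_nonneg (by exact_mod_cast hn)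
  have hlogt : log t ≤ 0 := log_nonpos ht.le ht1
  have hlog4 : 0 ≤ log 4 := log_nonneg (by norm_num)
  rw [log_mul (by positivity) (by positivity), log_mul (by positivity) (by positivity), log_pow,
    log_div (by positivity) (by positivity), log_mul (by positivity) (by positivity),
    log_sqrt hn0.le, log_sqrt ht.le]
  have hk : (0 : ℝ) ≤ k := k.cast_nonneg
  nlinarith [mul_nonneg (mul_nonneg hk hlogC₀) (sub_nonneg.2 (hlogt.trans hlogn)),
    mul_nonneg hlog4 (sub_nonneg.2 (hlogt.trans hlogn)), mul_nonneg hk hlogn,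
    mul_nonneg hk (neg_nonneg.2 hlogt)]

lemma natCast_mul_two_mul_exp_neg_le {k n m : ℕ} {C₀ t : ℝ} (hC₀ : 1 ≤ C₀) (hn : 1 ≤ n)
    (ht : 0 < t) (ht1 : t ≤ 1) (hm : (m : ℝ) ≤ (C₀ / (1 / √n * √t)) ^ k) :
    m * (2 * exp (-((k * (log C₀ + 1) + log 4 + 1) * (log n - log t + 1)))) ≤ 1 / (2 * n) := by
  set a := (k * (log C₀ + 1) + log 4 + 1) * (log n - log t + 1)
  have hn0 : (0 : ℝ) < n := by exact_mod_cast hn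
  have hB : C₀ / (1 / √n * √t) = C₀ * √n / √t := by field_simp
  have hm' : 4 * n * m ≤ exp a := by
    calc 4 * n * (m : ℝ) ≤ 4 * n * (C₀ * √n / √t) ^ k := by rw [← hB]; gcongr
      _ ≤ exp a := (log_le_iff_le_exp (by positivity)).1 (log_four_mul_mul_pow_le hC₀ hn ht ht1)
  calc (m : ℝ) * (2 * exp (-a)) = 4 * n * m * exp (-a) / (2 * n) := by field_simp; ring
    _ ≤ exp a * exp (-a) / (2 * n) := by gcongr
    _ = 1 / (2 * n) := by rw [← exp_add, add_neg_cancel, exp_zero]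

theorem stmt7_general (k : ℕ) (C₀ : ℝ) (hC₀ : 1 ≤ C₀) :
    ∃ C : ℝ, 0 < C ∧
      ∀ (E Ω ι : Type) [MeasurableSpace E] [MeasurableSpace Ω] [Countable ι],
      ∀ (μ : Measure E) (P : Measure Ω),
        IsProbabilityMeasure μ → IsProbabilityMeasure P →
      ∀ (X : ℕ → Ω → E), (∀ i, Measurable (X i)) →
        ProbabilityTheory.iIndepFun X P →
        (∀ i, Measure.map (X i) P = μ) →
      ∀ (F : ι → E → ℝ), (∀ i, Measurable (F i)) →
        (∀ i x, F i x ∈ Set.Icc (-1 : ℝ) 1) →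
      ∀ t : ℝ, 0 < t → t ≤ 1 →
      (∀ ε : ℝ, 0 < ε →
        ∃ (m : ℕ) (g : Fin m → E → ℝ),
          (m : ℝ) ≤ (C₀ / (ε * Real.sqrt t)) ^ k ∧
          (∀ j, Measurable (g j)) ∧
          (∀ j x, g j x ∈ Set.Icc (-1 : ℝ) 1) ∧
          (∀ i : ι, ∃ j : Fin m, ∀ x : E, |F i x - g j x| ≤ ε)) →
      ∀ n : ℕ, 2 ≤ n →
        ENNReal.ofReal (1 - 1 / (2 * (n : ℝ))) ≤
          P {ω : Ω |
            (⨆ i : ι,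
              |(1 / (n : ℝ)) * ∑ j ∈ Finset.range n, F i (X j ω) - ∫ x, F i x ∂μ|)
              ≤ C / Real.sqrt n * Real.sqrt (Real.log n - Real.log t + 1)} := by
  set K := k * (log C₀ + 1) + log 4 + 1
  have hK : 0 < K := by have := log_nonneg hC₀; positivity
  refine ⟨√(2 * K) + 2, by positivity, ?_⟩
  intro E Ω ι _ _ _ μ P _ _ X hX h_indep hlaw F hF hF_bdd t ht ht1 hnet n hn
  set L := log n - log t + 1
  have hL : 1 ≤ L := by
    linarith [log_nonneg (show (1 : ℝ) ≤ n by exact_mod_cast (by omega : 1 ≤ n)),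
      log_nonpos ht.le ht1]
  have hn0 : (0 : ℝ) < n := by exact_mod_cast (by omega : 0 < n)
  obtain ⟨m, g, hm, hg, hg_bdd, hFg⟩ := hnet (1 / √n) (by positivity)
  set δ := √(2 * K) * √L / √n
  have hδ : n * δ ^ 2 / 2 = K * L := by
    rw [div_pow, mul_pow, sq_sqrt (by positivity), sq_sqrt (by positivity), sq_sqrt hn0.le]
    field_simp
  have hbound : δ + 2 * (1 / √n) ≤ (√(2 * K) + 2) / √n * √L := by
    have : 1 ≤ √L := one_le_sqrt.2 hL
    calc δ + 2 * (1 / √n) = (√(2 * K) * √L + 2 * 1) / √n := by ring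
      _ ≤ (√(2 * K) * √L + 2 * √L) / √n := by gcongr
      _ = (√(2 * K) + 2) / √n * √L := by ring
  calc ENNReal.ofReal (1 - 1 / (2 * (n : ℝ)))
      ≤ ENNReal.ofReal (1 - m * (2 * exp (-(n * δ ^ 2 / 2)))) := by
        rw [hδ]
        gcongr
        exact natCast_mul_two_mul_exp_neg_le hC₀ (by omega) ht ht1 hm
    _ ≤ P {ω | ∀ i, |empiricalMean (F i) n (X · ω) - ∫ x, F i x ∂μ| ≤ δ + 2 * (1 / √n)} :=
        ofReal_one_sub_le_measure_forall_abs_empiricalMean_sub_integral_le hX h_indep hlaw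
          (fun i ↦ Integrable.of_mem_Icc (-1) 1 (hF i).aemeasurable (ae_of_all _ (hF_bdd i)))
          hg hg_bdd hFg (by omega) (by positivity)
    _ ≤ _ := measure_mono fun ω hω ↦ Real.iSup_le (fun i ↦ (hω i).trans hbound) (by positivity)

/-- If a countable family `F` of measurable `[−1,1]`-valued functions
admits, for every `ε > 0`, an `ε`-net in the uniform norm of cardinality at most
`(C₀/(ε·√t))^k` (with `k ≥ 1`, `C₀ ≥ 1`, `t ∈ (0,1]`), then there is a constant `C > 0`
depending only on `C₀` and `k` such that for every `n ≥ 2`, with probability at least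
`1 − 1/(2n)`, `sup_{f∈F} |(1/n)∑_{i=1}^n f(X_i) − ∫ f dμ| ≤ C·n^{−1/2}·(ln n − ln t + 1)^{1/2}`
for i.i.d. samples `X_1, X_2, …` with law `μ`. -/
theorem stmt7 (k : ℕ) (hk : 1 ≤ k) (C₀ : ℝ) (hC₀ : 1 ≤ C₀) :
    ∃ C : ℝ, 0 < C ∧
      ∀ (E Ω ι : Type) [MeasurableSpace E] [MeasurableSpace Ω] [Countable ι],
      ∀ (μ : Measure E) (P : Measure Ω),
        IsProbabilityMeasure μ → IsProbabilityMeasure P →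
      ∀ (X : ℕ → Ω → E), (∀ i, Measurable (X i)) →
        ProbabilityTheory.iIndepFun X P →
        (∀ i, Measure.map (X i) P = μ) →
      ∀ (F : ι → E → ℝ), (∀ i, Measurable (F i)) →
        (∀ i x, F i x ∈ Set.Icc (-1 : ℝ) 1) →
      ∀ t : ℝ, 0 < t → t ≤ 1 →
      (∀ ε : ℝ, 0 < ε →
        ∃ (m : ℕ) (g : Fin m → E → ℝ),
          (m : ℝ) ≤ (C₀ / (ε * Real.sqrt t)) ^ k ∧
          (∀ j, Measurable (g j)) ∧
          (∀ j x, g j x ∈ Set.Icc (-1 : ℝ) 1) ∧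
          (∀ i : ι, ∃ j : Fin m, ∀ x : E, |F i x - g j x| ≤ ε)) →
      ∀ n : ℕ, 2 ≤ n →
        ENNReal.ofReal (1 - 1 / (2 * (n : ℝ))) ≤
          P {ω : Ω |
            (⨆ i : ι,
              |(1 / (n : ℝ)) * ∑ j ∈ Finset.range n, F i (X j ω) - ∫ x, F i x ∂μ|)
              ≤ C / Real.sqrt n * Real.sqrt (Real.log n - Real.log t + 1)} :=
  stmt7_general k C₀ hC₀
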